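/- arXiv:math/0111058 — 2 statements merged into one kernel-verified Lean document; each statement's English description precedes it below -/
import Mathlib

section
/- In the monoid K_ω, the element c = δ_1 γ_1 satisfies δ_k γ_k = c for every positive integer k, and c is central: x·c = c·x for every element x of K_ω. -/
/-- Generators of the monoid `K_ω`: a cup `δ_k` and a cap `γ_k` for every positive integer `k`. -/
inductive KGen : Type
  | cup : ℕ+ → KGen
  | cap : ℕ+ → KGen

/-- Words in the generators, i.e. elements of the free monoid on the generators. -/
abbrev KWord : Type := FreeMonoid KGen

/-- The word consisting of the single cup generator `δ_k`. -/
def cupW (k : ℕ+) : KWord := FreeMonoid.of (KGen.cup k)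

/-- The word consisting of the single cap generator `γ_k`. -/
def capW (k : ℕ+) : KWord := FreeMonoid.of (KGen.cap k)

/-- The defining relations of the monoid `K_ω`: those of `L_ω` together with
`(cup-cap 4) : δ_k γ_k = δ_{k+1} γ_{k+1}`. -/
inductive KRel : KWord → KWord → Prop
  | cup {k l : ℕ+} (h : l ≤ k) : KRel (cupW k * cupW l) (cupW l * cupW (k + 2))
  | cap {k l : ℕ+} (h : l ≤ k) : KRel (capW l * capW k) (capW (k + 2) * capW l)
  | cupcap₁ {k l : ℕ+} (h : l ≤ k) : KRel (cupW l * capW (k + 2)) (capW k * cupW l)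
  | cupcap₂ {k l : ℕ+} (h : l ≤ k) : KRel (cupW (k + 2) * capW l) (capW l * cupW k)
  | cupcap₃ (k : ℕ+) : KRel (cupW k * capW (k + 1)) 1
  | cupcap₃' (k : ℕ+) : KRel (cupW (k + 1) * capW k) 1
  | cupcap₄ (k : ℕ+) : KRel (cupW k * capW k) (cupW (k + 1) * capW (k + 1))

/-- The smallest monoid congruence containing the defining relations of `K_ω`. -/
def KCon : Con KWord := conGen KRel

/-- The monoid `K_ω`, presented by the cups and caps subject to the relations `KRel`. -/
abbrev Komega : Type := KCon.Quotient

/-- The cup `δ_k` as an element of `K_ω`. -/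
def dk (k : ℕ+) : Komega := KCon.mk' (cupW k)

/-- The cap `γ_k` as an element of `K_ω`. -/
def gk (k : ℕ+) : Komega := KCon.mk' (capW k)

/-- The circle `c = δ_1 γ_1` of `K_ω`. -/
def circ : Komega := dk 1 * gk 1

/-! The relation `δ_k γ_k = δ_{k+1} γ_{k+1}` makes all the `δ_k γ_k` equal to `c` by induction
on `k`. For centrality it suffices to let `c` commute with the generators, and for a generator
one writes `c` at a convenient index: `δ_l c = δ_l δ_{l+2} γ_{l+2} = δ_l δ_l γ_{l+2}
= δ_l γ_l δ_l = c δ_l` by (cup) and (cup-cap 1), and symmetrically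
`γ_l c = γ_l δ_l γ_l = δ_{l+2} γ_l γ_l = δ_{l+2} γ_{l+2} γ_l = c γ_l` by (cup-cap 2) and (cap). -/

theorem FreeMonoid.commute_of_surjective {α M : Type*} [Monoid M] {f : FreeMonoid α →* M}
    (hf : Function.Surjective f) {c : M} (h : ∀ a, Commute (f (FreeMonoid.of a)) c) (x : M) :
    Commute x c := by
  obtain ⟨w, rfl⟩ := hf x
  induction w using FreeMonoid.inductionOn' with
  | one => simp
  | of_mul a w ih => simpa only [map_mul] using (h a).mul_left ih

namespace Komega

lemma mk_mul_mk_eq_of_rel {a b c d : KWord} (h : KRel (a * b) (c * d)) :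
    KCon.mk' a * KCon.mk' b = KCon.mk' c * KCon.mk' d :=
  (map_mul KCon.mk' a b).symm.trans <| (KCon.eq.mpr (.of _ _ h)).trans (map_mul KCon.mk' c d)

lemma dk_mul_dk (l : ℕ+) : dk l * dk l = dk l * dk (l + 2) :=
  mk_mul_mk_eq_of_rel (KRel.cup le_rfl)

lemma gk_mul_gk (l : ℕ+) : gk l * gk l = gk (l + 2) * gk l :=
  mk_mul_mk_eq_of_rel (KRel.cap le_rfl)

lemma dk_mul_gk_add_two (l : ℕ+) : dk l * gk (l + 2) = gk l * dk l :=
  mk_mul_mk_eq_of_rel (KRel.cupcap₁ le_rfl)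

lemma dk_add_two_mul_gk (l : ℕ+) : dk (l + 2) * gk l = gk l * dk l :=
  mk_mul_mk_eq_of_rel (KRel.cupcap₂ le_rfl)

lemma dk_mul_gk_succ (k : ℕ+) : dk (k + 1) * gk (k + 1) = dk k * gk k :=
  (mk_mul_mk_eq_of_rel (KRel.cupcap₄ k)).symm

lemma dk_mul_gk (k : ℕ+) : dk k * gk k = circ := by
  induction k using PNat.recOn with
  | one => rfl
  | succ n ih => rw [dk_mul_gk_succ, ih]

lemma commute_dk_circ (l : ℕ+) : Commute (dk l) circ :=
  calc dk l * circ = dk l * dk (l + 2) * gk (l + 2) := by rw [mul_assoc, dk_mul_gk]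
    _ = dk l * (dk l * gk (l + 2)) := by rw [← dk_mul_dk, mul_assoc]
    _ = circ * dk l := by rw [dk_mul_gk_add_two, ← mul_assoc, dk_mul_gk]

lemma commute_gk_circ (l : ℕ+) : Commute (gk l) circ :=
  calc gk l * circ = dk (l + 2) * gk l * gk l := by
        rw [← dk_mul_gk l, ← mul_assoc, dk_add_two_mul_gk]
    _ = dk (l + 2) * gk (l + 2) * gk l := by rw [mul_assoc, gk_mul_gk, ← mul_assoc]
    _ = circ * gk l := by rw [dk_mul_gk]

lemma commute_circ (x : Komega) : Commute x circ :=
  FreeMonoid.commute_of_surjective KCon.mk'_surjective (fun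
    | KGen.cup k => commute_dk_circ k
    | KGen.cap k => commute_gk_circ k) x

end Komega

/-- In `K_ω`, the element `c = δ_1 γ_1` satisfies `δ_k γ_k = c` for every positive
integer `k`, and `c` is central. -/
theorem Komega.circle_unique_and_central :
    (∀ k : ℕ+, dk k * gk k = circ) ∧ (∀ x : Komega, x * circ = circ * x) :=
  ⟨Komega.dk_mul_gk, Komega.commute_circ⟩
end

section
/- Every element of the monoid K_ω can be written as γ_{j_1} ⋯ γ_{j_m} · c^l · δ_{i_1} ⋯ δ_{i_n} for some m, n, l ≥ 0 with j_1 > … > j_m and i_1 < … < i_n (the empty product being 1), and this representation is unique: the numbers m, n, l and the index sequences are uniquely determined by the element. -/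
/-!
Van der Waerden's trick. Normal words (strictly decreasing caps, a number of circles, strictly
increasing cups) carry an action of the generators: a cap is inserted into the caps using the
cap relation, and a cup travels through the caps, being shifted by the mixed relations, until it
is absorbed (`cup-cap 3`), closes a circle (`cup-cap 4`), or is inserted into the cups. The
defining relations hold for this action on normal words, so it is an action of `K_ω`; it is
compatible with evaluation, hence the image of the empty word under `x` evaluates to `x`
(existence), and the image of the empty word under the value of a normal word is that word
(uniqueness).
-/

namespace Komega

/-- Indices are shifted to start at `0`: `cap n = γ_{n+1}` and `cup n = δ_{n+1}`. -/
def cap (n : ℕ) : Komega := gk n.succPNat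

def cup (n : ℕ) : Komega := dk n.succPNat

theorem mk'_eq_of_rel {u v : KWord} (h : KRel u v) : (KCon.mk' u : Komega) = KCon.mk' v :=
  (Con.eq _).2 (ConGen.Rel.of _ _ h)

theorem cup_mul_cup {l k : ℕ} (h : l ≤ k) : cup k * cup l = cup l * cup (k + 2) :=
  mk'_eq_of_rel (KRel.cup (Nat.succPNat_le_succPNat.2 h))

theorem cap_mul_cap {l k : ℕ} (h : l ≤ k) : cap l * cap k = cap (k + 2) * cap l :=
  mk'_eq_of_rel (KRel.cap (Nat.succPNat_le_succPNat.2 h))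

theorem cup_mul_cap_add_two {l k : ℕ} (h : l ≤ k) : cup l * cap (k + 2) = cap k * cup l :=
  mk'_eq_of_rel (KRel.cupcap₁ (Nat.succPNat_le_succPNat.2 h))

theorem cup_add_two_mul_cap {l k : ℕ} (h : l ≤ k) : cup (k + 2) * cap l = cap l * cup k :=
  mk'_eq_of_rel (KRel.cupcap₂ (Nat.succPNat_le_succPNat.2 h))

theorem cup_mul_cap_add_one (k : ℕ) : cup k * cap (k + 1) = 1 :=
  mk'_eq_of_rel (KRel.cupcap₃ k.succPNat)

theorem cup_add_one_mul_cap (k : ℕ) : cup (k + 1) * cap k = 1 :=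
  mk'_eq_of_rel (KRel.cupcap₃' k.succPNat)

theorem cup_mul_cap_self (k : ℕ) : cup k * cap k = circ := by
  induction k with
  | zero => rfl
  | succ k ih => rw [← ih]; exact (mk'_eq_of_rel (KRel.cupcap₄ k.succPNat)).symm

theorem commute_circ_cup (k : ℕ) : Commute circ (cup k) :=
  calc circ * cup k = cup k * (cap k * cup k) := by rw [← cup_mul_cap_self, mul_assoc]
    _ = cup k * circ := by
      rw [← cup_add_two_mul_cap le_rfl, ← mul_assoc, ← cup_mul_cup le_rfl, mul_assoc,
        cup_mul_cap_self]

theorem commute_circ_cap (k : ℕ) : Commute circ (cap k) :=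
  calc circ * cap k = cup k * (cap k * cap k) := by rw [← cup_mul_cap_self, mul_assoc]
    _ = cap k * circ := by
      rw [cap_mul_cap le_rfl, ← mul_assoc, cup_mul_cap_add_two le_rfl, mul_assoc,
        cup_mul_cap_self]

theorem dk_eq_cup (k : ℕ+) : dk k = cup k.natPred := by rw [cup, PNat.succPNat_natPred]

theorem gk_eq_cap (k : ℕ+) : gk k = cap k.natPred := by rw [cap, PNat.succPNat_natPred]

def capInsert (k : ℕ) : List ℕ → List ℕ
  | [] => [k]
  | j :: js => if j < k then k :: j :: js else (j + 2) :: capInsert k js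

def cupInsert : ℕ → List ℕ → List ℕ
  | k, [] => [k]
  | k, i :: is => if k < i then k :: i :: is else i :: cupInsert (k + 2) is

section Insert

variable {j k l : ℕ} {js : List ℕ}

theorem capInsert_cons_of_lt (h : j < k) : capInsert k (j :: js) = k :: j :: js := if_pos h

theorem capInsert_cons_of_le (h : k ≤ j) : capInsert k (j :: js) = (j + 2) :: capInsert k js :=
  if_neg (Nat.not_lt.2 h)

theorem cupInsert_cons_of_lt (h : k < j) : cupInsert k (j :: js) = k :: j :: js := if_pos h

theorem cupInsert_cons_of_le (h : j ≤ k) :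
    cupInsert k (j :: js) = j :: cupInsert (k + 2) js :=
  if_neg (Nat.not_lt.2 h)

theorem capInsert_eq_cons (h : ∀ x ∈ js, x < k) : capInsert k js = k :: js := by
  cases js with
  | nil => rfl
  | cons j js => exact capInsert_cons_of_lt (h j List.mem_cons_self)

theorem cupInsert_eq_cons (h : ∀ x ∈ js, k < x) : cupInsert k js = k :: js := by
  cases js with
  | nil => rfl
  | cons j js => exact cupInsert_cons_of_lt (h j List.mem_cons_self)

theorem capInsert_capInsert (h : l ≤ k) :
    capInsert l (capInsert k js) = capInsert (k + 2) (capInsert l js) := by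
  induction js with
  | nil => rw [capInsert, capInsert, capInsert_cons_of_le h, capInsert_cons_of_lt (by omega)]; rfl
  | cons j js ih =>
    rcases lt_or_ge j l with hjl | hlj
    · rw [capInsert_cons_of_lt (by omega), capInsert_cons_of_lt hjl, capInsert_cons_of_le h,
        capInsert_cons_of_lt hjl, capInsert_cons_of_lt (by omega)]
    rcases lt_or_ge j k with hjk | hkj
    · rw [capInsert_cons_of_lt hjk, capInsert_cons_of_le h, capInsert_cons_of_le hlj,
        capInsert_cons_of_lt (by omega)]
    · rw [capInsert_cons_of_le hkj, capInsert_cons_of_le (by omega), capInsert_cons_of_le hlj,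
        capInsert_cons_of_le (by omega), ih]

theorem cupInsert_cupInsert {is : List ℕ} (h : l ≤ k) :
    cupInsert k (cupInsert l is) = cupInsert l (cupInsert (k + 2) is) := by
  induction is generalizing l k with
  | nil => rw [cupInsert, cupInsert, cupInsert_cons_of_le h, cupInsert_cons_of_lt (by omega)]; rfl
  | cons i is ih =>
    rcases lt_or_ge k i with hki | hik
    · rw [cupInsert_cons_of_lt (by omega : l < i), cupInsert_cons_of_le h]
      rcases lt_or_ge (k + 2) i with hki' | hik'
      · rw [cupInsert_cons_of_lt hki', cupInsert_cons_of_lt (by omega)]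
      · rw [cupInsert_cons_of_le hik', cupInsert_cons_of_lt (by omega)]
    rcases lt_or_ge l i with hli | hil
    · rw [cupInsert_cons_of_lt hli, cupInsert_cons_of_le h, cupInsert_cons_of_le (by omega),
        cupInsert_cons_of_lt hli]
    · rw [cupInsert_cons_of_le hil, cupInsert_cons_of_le hik, cupInsert_cons_of_le (by omega),
        cupInsert_cons_of_le hil, ih (by omega)]

theorem mem_capInsert {x : ℕ} (hx : x ∈ capInsert k js) :
    x = k ∨ x ∈ js ∨ ∃ y ∈ js, x = y + 2 := by
  induction js with
  | nil => exact Or.inl (List.mem_singleton.1 hx)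
  | cons j js ih =>
    rcases lt_or_ge j k with hjk | hkj
    · rw [capInsert_cons_of_lt hjk, List.mem_cons] at hx
      exact hx.imp_right Or.inl
    · rw [capInsert_cons_of_le hkj, List.mem_cons] at hx
      rcases hx with rfl | hx
      · exact Or.inr (Or.inr ⟨j, List.mem_cons_self, rfl⟩)
      · rcases ih hx with h | h | ⟨y, hy, rfl⟩
        · exact Or.inl h
        · exact Or.inr (Or.inl (List.mem_cons_of_mem _ h))
        · exact Or.inr (Or.inr ⟨y, List.mem_cons_of_mem _ hy, rfl⟩)

theorem mem_cupInsert {x : ℕ} (hx : x ∈ cupInsert k js) : x ∈ js ∨ k ≤ x := by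
  induction js generalizing k with
  | nil => exact Or.inr (List.mem_singleton.1 hx).ge
  | cons j js ih =>
    rcases lt_or_ge k j with hkj | hjk
    · rw [cupInsert_cons_of_lt hkj, List.mem_cons] at hx
      exact hx.elim (fun h => Or.inr h.ge) Or.inl
    · rw [cupInsert_cons_of_le hjk, List.mem_cons] at hx
      rcases hx with rfl | hx
      · exact Or.inl List.mem_cons_self
      · exact (ih hx).imp (List.mem_cons_of_mem _) (by omega)

theorem pairwise_capInsert (hs : js.Pairwise (· > ·)) :
    (capInsert k js).Pairwise (· > ·) := by
  induction js with
  | nil => exact List.pairwise_singleton _ _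
  | cons j js ih =>
    rw [List.pairwise_cons] at hs
    rcases lt_or_ge j k with hjk | hkj
    · rw [capInsert_cons_of_lt hjk]
      refine List.Pairwise.cons (fun y hy => ?_) (List.pairwise_cons.2 hs)
      rcases List.mem_cons.1 hy with rfl | hy
      exacts [hjk, (hs.1 y hy).trans hjk]
    · rw [capInsert_cons_of_le hkj]
      refine List.Pairwise.cons (fun y hy => ?_) (ih hs.2)
      rcases mem_capInsert hy with rfl | hy | ⟨z, hz, rfl⟩
      · show y < j + 2; omega
      · exact (hs.1 y hy).trans (by omega)
      · exact Nat.add_lt_add_right (hs.1 z hz) 2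

theorem pairwise_cupInsert (hs : js.Pairwise (· < ·)) :
    (cupInsert k js).Pairwise (· < ·) := by
  induction js generalizing k with
  | nil => exact List.pairwise_singleton _ _
  | cons j js ih =>
    rw [List.pairwise_cons] at hs
    rcases lt_or_ge k j with hkj | hjk
    · rw [cupInsert_cons_of_lt hkj]
      refine List.Pairwise.cons (fun y hy => ?_) (List.pairwise_cons.2 hs)
      rcases List.mem_cons.1 hy with rfl | hy
      exacts [hkj, hkj.trans (hs.1 y hy)]
    · rw [cupInsert_cons_of_le hjk]
      refine List.Pairwise.cons (fun y hy => ?_) (ih hs.2)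
      rcases mem_cupInsert hy with hy | hy
      · exact hs.1 y hy
      · show j < y; omega

end Insert

theorem cap_mul_prod_map_cap (k : ℕ) (js : List ℕ) :
    cap k * (js.map cap).prod = ((capInsert k js).map cap).prod := by
  induction js with
  | nil => simp [capInsert]
  | cons j js ih =>
    rcases lt_or_ge j k with hjk | hkj
    · simp [capInsert_cons_of_lt hjk]
    · rw [capInsert_cons_of_le hkj, List.map_cons, List.prod_cons, List.map_cons, List.prod_cons,
        ← mul_assoc, cap_mul_cap hkj, mul_assoc, ih]

theorem cup_mul_prod_map_cup (k : ℕ) (is : List ℕ) :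
    cup k * (is.map cup).prod = ((cupInsert k is).map cup).prod := by
  induction is generalizing k with
  | nil => simp [cupInsert]
  | cons i is ih =>
    rcases lt_or_ge k i with hki | hik
    · simp [cupInsert_cons_of_lt hki]
    · rw [cupInsert_cons_of_le hik, List.map_cons, List.prod_cons, List.map_cons, List.prod_cons,
        ← mul_assoc, cup_mul_cup hik, mul_assoc, ih]

@[ext]
structure NormalWord where
  caps : List ℕ
  circles : ℕ
  cups : List ℕ

namespace NormalWord

def eval (w : NormalWord) : Komega :=
  (w.caps.map cap).prod * circ ^ w.circles * (w.cups.map cup).prod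

def IsNormal (w : NormalWord) : Prop :=
  w.caps.Pairwise (· > ·) ∧ w.cups.Pairwise (· < ·)

def capMul (k : ℕ) (w : NormalWord) : NormalWord := ⟨capInsert k w.caps, w.circles, w.cups⟩

def addCircle (w : NormalWord) : NormalWord := ⟨w.caps, w.circles + 1, w.cups⟩

def consCap (j : ℕ) (w : NormalWord) : NormalWord := ⟨j :: w.caps, w.circles, w.cups⟩

@[elab_as_elim]
theorem induction_caps {P : NormalWord → Prop} (w : NormalWord)
    (nil : ∀ c is, P ⟨[], c, is⟩) (cons : ∀ j w, P w → P (consCap j w)) : P w := by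
  obtain ⟨js, c, is⟩ := w
  induction js with
  | nil => exact nil c is
  | cons j js ih => exact cons j _ ih

def cupMul (k : ℕ) : NormalWord → NormalWord
  | ⟨[], c, is⟩ => ⟨[], c, cupInsert k is⟩
  | ⟨j :: js, c, is⟩ =>
    if k + 2 ≤ j then capMul (j - 2) (cupMul k ⟨js, c, is⟩)
    else if j = k + 1 ∨ k = j + 1 then ⟨js, c, is⟩
    else if j = k then ⟨js, c + 1, is⟩
    else capMul j (cupMul (k - 2) ⟨js, c, is⟩)
termination_by w => w.caps.length

section Rewriting

variable {j k c : ℕ} {is : List ℕ} (w : NormalWord)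

theorem cupMul_nil : cupMul k ⟨[], c, is⟩ = ⟨[], c, cupInsert k is⟩ := by
  rw [cupMul]

theorem cupMul_consCap_of_add_two_le (h : k + 2 ≤ j) :
    cupMul k (consCap j w) = capMul (j - 2) (cupMul k w) := by
  rw [consCap, cupMul, if_pos h]

theorem cupMul_consCap_of_adjacent (h : j = k + 1 ∨ k = j + 1) : cupMul k (consCap j w) = w := by
  rw [consCap, cupMul, if_neg (by omega), if_pos h]

theorem cupMul_consCap_self : cupMul k (consCap k w) = addCircle w := by
  rw [consCap, cupMul, if_neg (by omega), if_neg (by omega), if_pos rfl]; rfl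

theorem cupMul_consCap_of_add_two_le' (h : j + 2 ≤ k) :
    cupMul k (consCap j w) = capMul j (cupMul (k - 2) w) := by
  rw [consCap, cupMul, if_neg (by omega), if_neg (by omega), if_neg (by omega)]

theorem capMul_consCap_of_lt (h : j < k) : capMul k (consCap j w) = consCap k (consCap j w) := by
  rw [capMul, consCap, capInsert_cons_of_lt h]; rfl

theorem capMul_consCap_of_le (h : k ≤ j) :
    capMul k (consCap j w) = consCap (j + 2) (capMul k w) := by
  rw [capMul, consCap, capInsert_cons_of_le h]; rfl

theorem capMul_eq_consCap (h : ∀ x ∈ w.caps, x < k) : capMul k w = consCap k w := by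
  rw [capMul, capInsert_eq_cons h]; rfl

theorem consCap_caps : (consCap j w).caps = j :: w.caps := rfl

end Rewriting

section Relations

variable {a b k l : ℕ} (w : NormalWord)

theorem capMul_capMul (h : l ≤ k) : capMul l (capMul k w) = capMul (k + 2) (capMul l w) := by
  simp only [capMul, capInsert_capInsert h]

theorem cupMul_addCircle : cupMul k (addCircle w) = addCircle (cupMul k w) := by
  induction w using induction_caps generalizing k with
  | nil c is => simp only [addCircle, cupMul_nil]
  | cons j w ih =>
    have hc : addCircle (consCap j w) = consCap j (addCircle w) := rfl
    rcases (by omega : k + 2 ≤ j ∨ (j = k + 1 ∨ k = j + 1) ∨ j = k ∨ j + 2 ≤ k)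
      with h | h | rfl | h
    · rw [hc, cupMul_consCap_of_add_two_le _ h, cupMul_consCap_of_add_two_le _ h, ih]; rfl
    · rw [hc, cupMul_consCap_of_adjacent _ h, cupMul_consCap_of_adjacent _ h]
    · rw [hc, cupMul_consCap_self, cupMul_consCap_self]
    · rw [hc, cupMul_consCap_of_add_two_le' _ h, cupMul_consCap_of_add_two_le' _ h, ih]; rfl

theorem cupMul_capMul_of_add_two_le (h : a + 2 ≤ b) :
    cupMul a (capMul b w) = capMul (b - 2) (cupMul a w) := by
  induction w using induction_caps with
  | nil c is => exact cupMul_consCap_of_add_two_le ⟨[], c, is⟩ h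
  | cons j w ih =>
    rcases lt_or_ge j b with hjb | hbj
    · rw [capMul_consCap_of_lt _ hjb, cupMul_consCap_of_add_two_le _ h]
    · rw [capMul_consCap_of_le _ hbj, cupMul_consCap_of_add_two_le _ (by omega),
        Nat.add_sub_cancel, ih, cupMul_consCap_of_add_two_le _ (by omega),
        capMul_capMul _ (by omega : b - 2 ≤ j - 2), Nat.sub_add_cancel (by omega)]

theorem cupMul_capMul_of_add_two_le' (h : b + 2 ≤ a) :
    cupMul a (capMul b w) = capMul b (cupMul (a - 2) w) := by
  induction w using induction_caps generalizing a with
  | nil c is => exact cupMul_consCap_of_add_two_le' ⟨[], c, is⟩ h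
  | cons j w ih =>
    rcases lt_or_ge j b with hjb | hbj
    · rw [capMul_consCap_of_lt _ hjb, cupMul_consCap_of_add_two_le' _ h]
    rw [capMul_consCap_of_le _ hbj]
    rcases (by omega : a ≤ j ∨ (j + 1 = a ∨ j + 3 = a) ∨ j + 2 = a ∨ j + 4 ≤ a)
      with hc | hc | rfl | hc
    · rw [cupMul_consCap_of_add_two_le _ (by omega), Nat.add_sub_cancel, ih h,
        cupMul_consCap_of_add_two_le _ (by omega), capMul_capMul _ (by omega : b ≤ j - 2),
        Nat.sub_add_cancel (by omega)]
    · rw [cupMul_consCap_of_adjacent _ (by omega), cupMul_consCap_of_adjacent _ (by omega)]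
    · rw [cupMul_consCap_self, Nat.add_sub_cancel, cupMul_consCap_self]; rfl
    · rw [cupMul_consCap_of_add_two_le' _ hc, ih (by omega),
        cupMul_consCap_of_add_two_le' _ (by omega), capMul_capMul _ hbj]

theorem cupMul_capMul_of_adjacent (hs : w.caps.Pairwise (· > ·)) (h : b = a + 1 ∨ a = b + 1) :
    cupMul a (capMul b w) = w := by
  induction w using induction_caps with
  | nil c is => exact cupMul_consCap_of_adjacent ⟨[], c, is⟩ h
  | cons j w ih =>
    rw [consCap_caps, List.pairwise_cons] at hs
    rcases lt_or_ge j b with hjb | hbj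
    · rw [capMul_consCap_of_lt _ hjb, cupMul_consCap_of_adjacent _ h]
    rw [capMul_consCap_of_le _ hbj]
    rcases le_or_gt a j with haj | hja
    · rw [cupMul_consCap_of_add_two_le _ (by omega), Nat.add_sub_cancel, ih hs.2,
        capMul_eq_consCap _ hs.1]
    · obtain rfl : j = b := by omega
      rw [cupMul_consCap_of_adjacent _ (by omega), capMul_eq_consCap _ hs.1]

theorem cupMul_capMul_self (hs : w.caps.Pairwise (· > ·)) :
    cupMul a (capMul a w) = addCircle w := by
  induction w using induction_caps with
  | nil c is => exact cupMul_consCap_self ⟨[], c, is⟩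
  | cons j w ih =>
    rw [consCap_caps, List.pairwise_cons] at hs
    rcases lt_or_ge j a with hja | haj
    · rw [capMul_consCap_of_lt _ hja, cupMul_consCap_self]
    · rw [capMul_consCap_of_le _ haj, cupMul_consCap_of_add_two_le _ (by omega),
        Nat.add_sub_cancel, ih hs.2, capMul_eq_consCap (addCircle w) hs.1]; rfl

theorem pairwise_caps_cupMul (hs : w.caps.Pairwise (· > ·)) :
    (cupMul k w).caps.Pairwise (· > ·) := by
  induction w using induction_caps generalizing k with
  | nil c is => rw [cupMul_nil]; exact List.Pairwise.nil
  | cons j w ih =>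
    rw [consCap_caps, List.pairwise_cons] at hs
    rcases (by omega : k + 2 ≤ j ∨ (j = k + 1 ∨ k = j + 1) ∨ j = k ∨ j + 2 ≤ k)
      with h | h | rfl | h
    · rw [cupMul_consCap_of_add_two_le _ h]; exact pairwise_capInsert (ih hs.2)
    · rw [cupMul_consCap_of_adjacent _ h]; exact hs.2
    · rw [cupMul_consCap_self]; exact hs.2
    · rw [cupMul_consCap_of_add_two_le' _ h]; exact pairwise_capInsert (ih hs.2)

theorem pairwise_cups_cupMul (hs : w.cups.Pairwise (· < ·)) :
    (cupMul k w).cups.Pairwise (· < ·) := by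
  induction w using induction_caps generalizing k with
  | nil c is => rw [cupMul_nil]; exact pairwise_cupInsert hs
  | cons j w ih =>
    rcases (by omega : k + 2 ≤ j ∨ (j = k + 1 ∨ k = j + 1) ∨ j = k ∨ j + 2 ≤ k)
      with h | h | rfl | h
    · rw [cupMul_consCap_of_add_two_le _ h]; exact ih hs
    · rwa [cupMul_consCap_of_adjacent _ h]
    · rwa [cupMul_consCap_self]
    · rw [cupMul_consCap_of_add_two_le' _ h]; exact ih hs

theorem cupMul_cupMul (hs : w.caps.Pairwise (· > ·)) (h : l ≤ k) :
    cupMul k (cupMul l w) = cupMul l (cupMul (k + 2) w) := by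
  induction w using induction_caps generalizing k l with
  | nil c is => simp only [cupMul_nil, cupInsert_cupInsert h]
  | cons j w ih =>
    rw [consCap_caps, List.pairwise_cons] at hs
    have hsl := pairwise_caps_cupMul (k := l) w hs.2
    have hsk := pairwise_caps_cupMul (k := k) w hs.2
    rcases (by omega : l + 2 ≤ j ∨ (j = l + 1 ∨ l = j + 1) ∨ j = l ∨ j + 2 ≤ l)
      with hj | hj | rfl | hj
    · rw [cupMul_consCap_of_add_two_le _ hj]
      rcases (by omega :
          k + 2 ≤ j - 2 ∨ (j - 2 = k + 1 ∨ k = j - 2 + 1) ∨ j - 2 = k ∨ j ≤ k)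
        with hk | hk | hk | hk
      · rw [cupMul_capMul_of_add_two_le _ hk, ih hs.2 h, cupMul_consCap_of_add_two_le _ (by omega),
          cupMul_capMul_of_add_two_le _ (by omega)]
      · rw [cupMul_capMul_of_adjacent _ hsl hk, cupMul_consCap_of_adjacent _ (by omega)]
      · obtain rfl : j = k + 2 := by omega
        rw [Nat.add_sub_cancel, cupMul_capMul_self _ hsl, cupMul_consCap_self, cupMul_addCircle]
      · rw [cupMul_capMul_of_add_two_le' _ (by omega), ih hs.2 (by omega),
          Nat.sub_add_cancel (by omega), cupMul_consCap_of_add_two_le' _ (by omega),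
          Nat.add_sub_cancel, cupMul_capMul_of_add_two_le _ hj]
    · rw [cupMul_consCap_of_adjacent _ hj]
      rcases (by omega : l = k ∧ j = k + 1 ∨ j ≤ k) with ⟨rfl, rfl⟩ | hk
      · rw [cupMul_consCap_of_adjacent _ (by omega)]
      · rw [cupMul_consCap_of_add_two_le' _ (by omega), Nat.add_sub_cancel,
          cupMul_capMul_of_adjacent _ hsk hj]
    · rw [cupMul_consCap_self, cupMul_addCircle, cupMul_consCap_of_add_two_le' _ (by omega),
        Nat.add_sub_cancel, cupMul_capMul_self _ hsk]
    · rw [cupMul_consCap_of_add_two_le' _ hj, cupMul_capMul_of_add_two_le' _ (by omega),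
        ih hs.2 (by omega), Nat.sub_add_cancel (by omega),
        cupMul_consCap_of_add_two_le' _ (by omega), Nat.add_sub_cancel,
        cupMul_capMul_of_add_two_le' _ hj]

end Relations

theorem IsNormal.capMul {k : ℕ} {w : NormalWord} (hw : w.IsNormal) : (capMul k w).IsNormal :=
  ⟨pairwise_capInsert hw.1, hw.2⟩

theorem IsNormal.cupMul {k : ℕ} {w : NormalWord} (hw : w.IsNormal) : (cupMul k w).IsNormal :=
  ⟨pairwise_caps_cupMul w hw.1, pairwise_cups_cupMul w hw.2⟩

variable {k : ℕ} (w : NormalWord)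

theorem eval_capMul : (capMul k w).eval = cap k * w.eval := by
  simp only [eval, capMul, ← cap_mul_prod_map_cap, mul_assoc]

theorem eval_consCap : (consCap k w).eval = cap k * w.eval := by
  simp only [eval, consCap, List.map_cons, List.prod_cons, mul_assoc]

theorem eval_addCircle : (addCircle w).eval = circ * w.eval := by
  have : Commute circ (w.caps.map cap).prod :=
    Commute.list_prod_right _ _ fun _ hx => by
      obtain ⟨j, -, rfl⟩ := List.mem_map.1 hx
      exact commute_circ_cap j
  simp only [eval, addCircle, pow_succ', ← mul_assoc, this.eq]

theorem eval_cupMul : (cupMul k w).eval = cup k * w.eval := by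
  induction w using induction_caps generalizing k with
  | nil c is =>
    simp only [cupMul_nil, eval, List.map_nil, List.prod_nil, one_mul]
    rw [← cup_mul_prod_map_cup, ← mul_assoc, ← mul_assoc,
      ((commute_circ_cup k).pow_left c).eq]
  | cons j w ih =>
    rw [eval_consCap, ← mul_assoc]
    rcases (by omega : k + 2 ≤ j ∨ j = k + 1 ∨ k = j + 1 ∨ j = k ∨ j + 2 ≤ k)
      with h | rfl | rfl | rfl | h
    · rw [cupMul_consCap_of_add_two_le _ h, eval_capMul, ih, ← mul_assoc,
        ← cup_mul_cap_add_two (by omega : k ≤ j - 2), Nat.sub_add_cancel (by omega)]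
    · rw [cupMul_consCap_of_adjacent _ (.inl rfl), cup_mul_cap_add_one, one_mul]
    · rw [cupMul_consCap_of_adjacent _ (.inr rfl), cup_add_one_mul_cap, one_mul]
    · rw [cupMul_consCap_self, eval_addCircle, cup_mul_cap_self]
    · rw [cupMul_consCap_of_add_two_le' _ h, eval_capMul, ih, ← mul_assoc,
        ← cup_add_two_mul_cap (by omega : j ≤ k - 2), Nat.sub_add_cancel (by omega)]

end NormalWord

open NormalWord

theorem natPred_add_two (k : ℕ+) : (k + 2).natPred = k.natPred + 2 := by
  have := k.pos; simp only [PNat.natPred, PNat.add_coe, PNat.val_ofNat]; omega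

theorem natPred_add_one (k : ℕ+) : (k + 1).natPred = k.natPred + 1 := by
  have := k.pos; simp only [PNat.natPred, PNat.add_coe, PNat.one_coe]; omega

abbrev NormalForm : Type := {w : NormalWord // w.IsNormal}

def NormalForm.one : NormalForm := ⟨⟨[], 0, []⟩, .nil, .nil⟩

def generatorAction : KGen → Function.End NormalForm
  | .cup k => fun w => ⟨cupMul k.natPred w, w.2.cupMul⟩
  | .cap k => fun w => ⟨capMul k.natPred w, w.2.capMul⟩

theorem generatorAction_rel {u v : KWord} (h : KRel u v) :
    FreeMonoid.lift generatorAction u = FreeMonoid.lift generatorAction v := by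
  funext ⟨w, hw⟩
  apply Subtype.ext
  cases h with
  | cup h =>
    show cupMul _ (cupMul _ w) = cupMul _ (cupMul _ w)
    rw [natPred_add_two]
    exact cupMul_cupMul w hw.1 (PNat.natPred_le_natPred.2 h)
  | cap h =>
    show capMul _ (capMul _ w) = capMul _ (capMul _ w)
    rw [natPred_add_two]
    exact capMul_capMul w (PNat.natPred_le_natPred.2 h)
  | cupcap₁ h =>
    show cupMul _ (capMul _ w) = capMul _ (cupMul _ w)
    have h' := Nat.add_le_add_right (PNat.natPred_le_natPred.2 h) 2
    rw [natPred_add_two, cupMul_capMul_of_add_two_le w h', Nat.add_sub_cancel]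
  | cupcap₂ h =>
    show cupMul _ (capMul _ w) = capMul _ (cupMul _ w)
    have h' := Nat.add_le_add_right (PNat.natPred_le_natPred.2 h) 2
    rw [natPred_add_two, cupMul_capMul_of_add_two_le' w h', Nat.add_sub_cancel]
  | cupcap₃ k =>
    show cupMul _ (capMul _ w) = w
    exact cupMul_capMul_of_adjacent w hw.1 (.inl (natPred_add_one k))
  | cupcap₃' k =>
    show cupMul _ (capMul _ w) = w
    exact cupMul_capMul_of_adjacent w hw.1 (.inr (natPred_add_one k))
  | cupcap₄ k =>
    show cupMul _ (capMul _ w) = cupMul _ (capMul _ w)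
    rw [cupMul_capMul_self w hw.1, cupMul_capMul_self w hw.1]

def action : Komega →* Function.End NormalForm :=
  KCon.lift (FreeMonoid.lift generatorAction)
    (Con.conGen_le.2 fun _ _ h => (Con.ker_rel _).2 (generatorAction_rel h))

theorem action_mk' (w : KWord) : action (KCon.mk' w) = FreeMonoid.lift generatorAction w :=
  Con.lift_coe _ w

theorem action_cup_val (n : ℕ) (s : NormalForm) :
    (action (cup n) s).1 = cupMul n s.1 := by
  rw [cup, dk, action_mk', cupW, FreeMonoid.lift_eval_of]
  exact congrArg (cupMul · s.1) (Nat.natPred_succPNat n)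

theorem action_cap_val (n : ℕ) (s : NormalForm) :
    (action (cap n) s).1 = capMul n s.1 := by
  rw [cap, gk, action_mk', capW, FreeMonoid.lift_eval_of]
  exact congrArg (capMul · s.1) (Nat.natPred_succPNat n)

theorem action_mul_apply (x y : Komega) (s : NormalForm) :
    action (x * y) s = action x (action y s) := by
  rw [map_mul]; rfl

theorem eval_action_val (x : Komega) (s : NormalForm) :
    (action x s).1.eval = x * s.1.eval := by
  induction x using Con.induction_on generalizing s with | H u =>
  induction u using FreeMonoid.inductionOn generalizing s with
  | one => rw [Con.coe_one, map_one, one_mul]; rfl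
  | of g =>
    cases g with
    | cup k =>
      show (action (dk k) s).1.eval = dk k * s.1.eval
      rw [dk_eq_cup, action_cup_val, eval_cupMul]
    | cap k =>
      show (action (gk k) s).1.eval = gk k * s.1.eval
      rw [gk_eq_cap, action_cap_val, eval_capMul]
  | mul u v hu hv => rw [Con.coe_mul, action_mul_apply, hu, hv, mul_assoc]

theorem action_circ_val (s : NormalForm) :
    (action circ s).1 = addCircle s.1 := by
  rw [← cup_mul_cap_self 0, action_mul_apply, action_cup_val, action_cap_val,
    cupMul_capMul_self _ s.2.1]

theorem action_circ_pow_val (n : ℕ) (s : NormalForm) :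
    (action (circ ^ n) s).1 = ⟨s.1.caps, s.1.circles + n, s.1.cups⟩ := by
  induction n with
  | zero => rw [pow_zero, map_one]; rfl
  | succ n ih => rw [pow_succ', action_mul_apply, action_circ_val, ih]; rfl

theorem action_prod_map_cup_one {is : List ℕ} (hs : is.Pairwise (· < ·)) :
    (action (is.map cup).prod NormalForm.one).1 = ⟨[], 0, is⟩ := by
  induction is with
  | nil => rw [List.map_nil, List.prod_nil, map_one]; rfl
  | cons i is ih =>
    rw [List.pairwise_cons] at hs
    rw [List.map_cons, List.prod_cons, action_mul_apply, action_cup_val, ih hs.2, cupMul_nil,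
      cupInsert_eq_cons hs.1]

theorem action_prod_map_cap {js : List ℕ} (hs : js.Pairwise (· > ·))
    (s : NormalForm) (h : s.1.caps = []) :
    (action (js.map cap).prod s).1 = ⟨js, s.1.circles, s.1.cups⟩ := by
  induction js with
  | nil => rw [List.map_nil, List.prod_nil, map_one, ← h]; rfl
  | cons j js ih =>
    rw [List.pairwise_cons] at hs
    rw [List.map_cons, List.prod_cons, action_mul_apply, action_cap_val, ih hs.2,
      capMul_eq_consCap _ hs.1]
    rfl

theorem NormalWord.IsNormal.action_eval_one {w : NormalWord} (hw : w.IsNormal) :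
    (action w.eval NormalForm.one).1 = w := by
  obtain ⟨js, c, is⟩ := w
  have hcups : (action (circ ^ c * (is.map cup).prod) NormalForm.one).1 = ⟨[], c, is⟩ := by
    rw [action_mul_apply, action_circ_pow_val, action_prod_map_cup_one hw.2]
    exact NormalWord.ext rfl (zero_add c) rfl
  rw [eval, mul_assoc, action_mul_apply, action_prod_map_cap hw.1 _ (by rw [hcups]), hcups]

theorem exists_isNormal_eval_eq (x : Komega) : ∃ w : NormalWord, w.IsNormal ∧ w.eval = x :=
  ⟨(action x NormalForm.one).1, (action x NormalForm.one).2, by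
    rw [eval_action_val]; simp [NormalForm.one, eval]⟩

theorem NormalWord.IsNormal.eq_of_eval_eq {v w : NormalWord} (hv : v.IsNormal) (hw : w.IsNormal)
    (h : v.eval = w.eval) : v = w := by
  rw [← hv.action_eval_one, ← hw.action_eval_one, h]

namespace NormalWord

def ofPNat (js : List ℕ+) (l : ℕ) (is : List ℕ+) : NormalWord :=
  ⟨js.map PNat.natPred, l, is.map PNat.natPred⟩

theorem eval_ofPNat (js : List ℕ+) (l : ℕ) (is : List ℕ+) :
    (ofPNat js l is).eval = (js.map gk).prod * circ ^ l * (is.map dk).prod := by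
  have hcap : cap ∘ PNat.natPred = gk := funext fun k => (gk_eq_cap k).symm
  have hcup : cup ∘ PNat.natPred = dk := funext fun k => (dk_eq_cup k).symm
  simp only [eval, ofPNat, List.map_map, hcap, hcup]

theorem isNormal_ofPNat_iff {js : List ℕ+} {l : ℕ} {is : List ℕ+} :
    (ofPNat js l is).IsNormal ↔ js.Pairwise (· > ·) ∧ is.Pairwise (· < ·) := by
  simp only [IsNormal, ofPNat, List.pairwise_map, gt_iff_lt, PNat.natPred_lt_natPred]

theorem ofPNat_inj {js js' : List ℕ+} {l l' : ℕ} {is is' : List ℕ+} :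
    ofPNat js l is = ofPNat js' l' is' ↔ js = js' ∧ l = l' ∧ is = is' := by
  simp only [ofPNat, mk.injEq, (List.map_injective_iff.2 PNat.natPred_injective).eq_iff]

theorem exists_eq_ofPNat (w : NormalWord) : ∃ js l is, w = ofPNat js l is :=
  ⟨w.caps.map Nat.succPNat, w.circles, w.cups.map Nat.succPNat, by
    simp [ofPNat, List.map_map, Function.comp_def]⟩

end NormalWord

end Komega

/-- Normal form in `K_ω`, existence and uniqueness: every element of `K_ω` can be written
as `γ_{j₁} ⋯ γ_{j_m} · c^l · δ_{i₁} ⋯ δ_{i_n}` with `j₁ > … > j_m` and `i₁ < … < i_n`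
(the empty product being `1`), and the numbers `m, n, l` and the index sequences are
uniquely determined by the element. -/
theorem Komega.normal_form (x : Komega) :
    ∃ (js : List ℕ+) (l : ℕ) (is : List ℕ+),
      List.Pairwise (· > ·) js ∧ List.Pairwise (· < ·) is ∧
      x = (js.map gk).prod * circ ^ l * (is.map dk).prod ∧
      ∀ (js' : List ℕ+) (l' : ℕ) (is' : List ℕ+),
        List.Pairwise (· > ·) js' → List.Pairwise (· < ·) is' →
        x = (js'.map gk).prod * circ ^ l' * (is'.map dk).prod →
        js' = js ∧ l' = l ∧ is' = is := by
  obtain ⟨w, hw, rfl⟩ := exists_isNormal_eval_eq x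
  obtain ⟨js, l, is, rfl⟩ := NormalWord.exists_eq_ofPNat w
  obtain ⟨hjs, his⟩ := NormalWord.isNormal_ofPNat_iff.1 hw
  refine ⟨js, l, is, hjs, his, NormalWord.eval_ofPNat js l is,
    fun js' l' is' hjs' his' h => NormalWord.ofPNat_inj.1 ?_⟩
  rw [← NormalWord.eval_ofPNat] at h
  exact (NormalWord.isNormal_ofPNat_iff.2 ⟨hjs', his'⟩).eq_of_eval_eq hw h.symm
end
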